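/- arXiv:0710.1370 — 3 statements merged into one kernel-verified Lean document; each statement's English description precedes it below -/
import Mathlib

section
/- (Lemma 1.) For every integer n ≥ 3, Σ_{k=1}^{n} C(⌊(n−h_k)/2⌋, ⌊k/2⌋) = (5+(−1)^n)·2^{⌊(n−3)/2⌋} − 1; equivalently, the sum equals 3·2^{(n−2)/2} − 1 when n is even and 2^{(n+1)/2} − 1 when n is odd. -/
open Finset

/-- Two (0,1)-configurations on `ZMod n` are related if one is carried to the
other by a rotation or a reflection. -/
def DihedralRel (n : ℕ) (c c' : ZMod n → Bool) : Prop :=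
  (∃ t : ZMod n, (fun i => c (i + t)) = c') ∨ (∃ a : ZMod n, (fun i => c (a - i)) = c')

/-- The number of orbits of the dihedral action meeting the class `P`. -/
noncomputable def orbitCount (n : ℕ) (P : (ZMod n → Bool) → Prop) : ℕ :=
  Nat.card {q : Quot (DihedralRel n) // ∃ c, Quot.mk (DihedralRel n) c = q ∧ P c}

/-- The number of positions with value `true` in a configuration. -/
noncomputable def numOnes (n : ℕ) (c : ZMod n → Bool) : ℕ := Nat.card {i : ZMod n // c i = true}

/-- A configuration is symmetric with respect to rotation if it has a nontrivial
rotational self-coincidence. -/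
def RotSym (n : ℕ) (c : ZMod n → Bool) : Prop := ∃ t : ZMod n, t ≠ 0 ∧ ∀ i, c (i + t) = c i

/-- A configuration has a diameter of symmetry. -/
def DiamSym (n : ℕ) (c : ZMod n → Bool) : Prop := ∃ a : ZMod n, ∀ i, c (a - i) = c i

/-- A configuration has at least `m` 0's between any two adjacent 1's. -/
def Spaced (n m : ℕ) (c : ZMod n → Bool) : Prop :=
  ∀ i : ZMod n, c i = true → ∀ j : ℕ, 1 ≤ j → j ≤ m → c (i + (j : ZMod n)) = false

/-- Gupta's expression `R(n,k)` from the Reis problem. -/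
def ReisR (n k : ℕ) : ℚ :=
  (1/2) * ((Nat.choose ((n - k % 2) / 2) (k / 2) : ℚ) +
    (1/(k : ℚ)) * ∑ d ∈ (Nat.gcd n k).divisors,
      (Nat.totient d : ℚ) * (Nat.choose (n / d - 1) (k / d - 1) : ℚ))

/-- `m`-Fibonacci numbers of type 1. -/
def Fgen (m n : ℕ) : ℕ :=
  if _h : n ≤ m then 1 else Fgen m (n - 1) + Fgen m (n - m - 1)
termination_by n
decreasing_by all_goals omega

/-- `m`-Fibonacci numbers of type 2. -/
def fgen (m n : ℕ) : ℕ :=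
  if _h : n ≤ m then (if n ≤ (m - 1) / 2 then 1 else 2)
  else fgen m (n - 1) + fgen m (n - m - 1)
termination_by n
decreasing_by all_goals omega

lemma sumPair (g : ℕ → ℤ) (M : ℕ) :
    ∑ k ∈ range (2 * M), g k = ∑ j ∈ range M, (g (2 * j) + g (2 * j + 1)) := by
  induction M with
  | zero => simp
  | succ M ih =>
    have h : 2 * (M + 1) = (2 * M + 1) + 1 := by ring
    rw [h, Finset.sum_range_succ, Finset.sum_range_succ, ih, Finset.sum_range_succ]
    ring

lemma iccToRange (g : ℕ → ℤ) (n : ℕ) :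
    ∑ k ∈ Finset.Icc 1 n, g k = (∑ k ∈ range (n + 1), g k) - g 0 := by
  have h : range (n + 1) = insert 0 (Finset.Icc 1 n) := by
    ext x; simp; omega
  rw [h, Finset.sum_insert (by simp)]
  ring

lemma choose_sum_range (m : ℕ) :
    ∑ j ∈ range (m + 1), (Nat.choose m j : ℤ) = 2 ^ m := by
  exact_mod_cast Nat.sum_range_choose m

/-- Lemma 1. -/
theorem lemma1 (n : ℕ) (hn : 3 ≤ n) :
    (∑ k ∈ Finset.Icc 1 n, (Nat.choose ((n - k % 2) / 2) (k / 2) : ℤ)) =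
      (5 + (-1 : ℤ) ^ n) * 2 ^ ((n - 3) / 2) - 1 := by
  set g : ℕ → ℤ := fun k => (Nat.choose ((n - k % 2) / 2) (k / 2) : ℤ) with hg
  rcases Nat.even_or_odd n with ⟨m, hm⟩ | ⟨m, hm⟩
  · -- n = 2m, m ≥ 2
    have hm2 : 2 ≤ m := by omega
    have hneg : (-1 : ℤ) ^ n = 1 := by
      rw [hm]; exact Even.neg_one_pow ⟨m, rfl⟩
    have hdiv : (n - 3) / 2 = m - 2 := by omega
    rw [iccToRange]
    have hn1 : n + 1 = 2 * m + 1 := by omega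
    rw [hn1, Finset.sum_range_succ, sumPair]
    have hlast : g (2 * m) = 1 := by
      simp only [hg]
      have h1 : (2 * m) % 2 = 0 := by omega
      have h2 : (n - 0) / 2 = m := by omega
      have h3 : (2 * m) / 2 = m := by omega
      rw [h1, h2, h3, Nat.choose_self]; norm_num
    have hterm : ∀ j ∈ range m, g (2 * j) + g (2 * j + 1) =
        (Nat.choose m j : ℤ) + (Nat.choose (m - 1) j : ℤ) := by
      intro j _
      simp only [hg]
      have h1 : (2 * j) % 2 = 0 := by omega
      have h2 : (2 * j + 1) % 2 = 1 := by omega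
      have h3 : (n - 0) / 2 = m := by omega
      have h4 : (n - 1) / 2 = m - 1 := by omega
      have h5 : (2 * j) / 2 = j := by omega
      have h6 : (2 * j + 1) / 2 = j := by omega
      rw [h1, h2, h3, h4, h5, h6]
    rw [Finset.sum_congr rfl hterm, Finset.sum_add_distrib]
    have hlast' : (((n - 2 * m % 2) / 2).choose (2 * m / 2) : ℤ) = 1 := by
      have e1 : (n - 2 * m % 2) / 2 = m := by omega
      have e2 : 2 * m / 2 = m := by omega
      rw [e1, e2, Nat.choose_self]; norm_num
    have hz : (((n - 0 % 2) / 2).choose (0 / 2) : ℤ) = 1 := by norm_num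
    rw [hlast', hz]
    have hA : ∑ j ∈ range m, (Nat.choose m j : ℤ) = 2 ^ m - 1 := by
      have := choose_sum_range m
      rw [Finset.sum_range_succ] at this
      simp at this
      omega
    have hB : ∑ j ∈ range m, (Nat.choose (m - 1) j : ℤ) = 2 ^ (m - 1) := by
      obtain ⟨m', rfl⟩ : ∃ m', m = m' + 1 := ⟨m - 1, by omega⟩
      simpa using choose_sum_range m'
    rw [hA, hB, hneg, hdiv]
    have h2m : (2 : ℤ) ^ m = 4 * 2 ^ (m - 2) := by
      obtain ⟨m', rfl⟩ : ∃ m', m = m' + 2 := ⟨m - 2, by omega⟩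
      simp [pow_succ]; ring
    have h2m1 : (2 : ℤ) ^ (m - 1) = 2 * 2 ^ (m - 2) := by
      obtain ⟨m', rfl⟩ : ∃ m', m = m' + 2 := ⟨m - 2, by omega⟩
      simp [pow_succ]; ring
    rw [h2m, h2m1]; ring
  · -- n = 2m + 1, m ≥ 1
    have hm1 : 1 ≤ m := by omega
    have hneg : (-1 : ℤ) ^ n = -1 := by
      rw [hm]; exact Odd.neg_one_pow ⟨m, rfl⟩
    have hdiv : (n - 3) / 2 = m - 1 := by omega
    rw [iccToRange]
    have hn1 : n + 1 = 2 * (m + 1) := by omega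
    rw [hn1, sumPair]
    have hterm : ∀ j ∈ range (m + 1), g (2 * j) + g (2 * j + 1) =
        (Nat.choose m j : ℤ) + (Nat.choose m j : ℤ) := by
      intro j _
      simp only [hg]
      have h1 : (2 * j) % 2 = 0 := by omega
      have h2 : (2 * j + 1) % 2 = 1 := by omega
      have h3 : (n - 0) / 2 = m := by omega
      have h4 : (n - 1) / 2 = m := by omega
      have h5 : (2 * j) / 2 = j := by omega
      have h6 : (2 * j + 1) / 2 = j := by omega
      rw [h1, h2, h3, h4, h5, h6]
    rw [Finset.sum_congr rfl hterm, Finset.sum_add_distrib, choose_sum_range]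
    have hz : (((n - 0 % 2) / 2).choose (0 / 2) : ℤ) = 1 := by norm_num
    rw [hz, hneg, hdiv]
    have h2m : (2 : ℤ) ^ m = 2 * 2 ^ (m - 1) := by
      obtain ⟨m', rfl⟩ : ∃ m', m = m' + 1 := ⟨m - 1, by omega⟩
      simp [pow_succ]; ring
    rw [h2m]; ring
end

section
/- (Lemma 2.) For every integer n ≥ 1, the following identity holds in ℚ: Σ_{k=1}^{n} (1/k)·Σ_{d | gcd(n,k)} φ(d)·C(n/d − 1, k/d − 1) = −1 + (1/n)·Σ_{d | n} φ(d)·2^{n/d}. -/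
open Finset

/-!
Swapping the two sums, the multiples `k = d * j` of a divisor `d ∣ n` contribute
`φ(d) / d * ∑_{j=1}^{m} C(m - 1, j - 1) / j` with `m = n / d`. By absorption
`C(m - 1, j - 1) / j = C(m, j) / m`, this is `φ(d) (2^m - 1) / n`, and `∑_{d ∣ n} φ(d) = n`
turns the `-1`'s into the constant `-1`.
-/

theorem sum_Icc_choose (m : ℕ) : ∑ j ∈ Icc 1 m, m.choose j = 2 ^ m - 1 := by
  rw [← Nat.sum_range_choose, range_eq_Ico, sum_eq_sum_Ico_succ_bot (Nat.succ_pos m),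
    Nat.choose_zero_right, Nat.add_sub_cancel_left]
  rfl

theorem sum_Icc_one_div_mul_choose_pred (m : ℕ) :
    ∑ j ∈ Icc 1 m, (1 / (j : ℚ)) * (m - 1).choose (j - 1) = (2 ^ m - 1) / m := by
  rcases Nat.eq_zero_or_pos m with rfl | hm
  · simp
  have absorb : ∀ j ∈ Icc 1 m, (1 / (j : ℚ)) * (m - 1).choose (j - 1) = m.choose j / m := by
    intro j hj
    have hj1 := (mem_Icc.mp hj).1
    have h := Nat.add_one_mul_choose_eq (m - 1) (j - 1)
    rw [Nat.sub_add_cancel hm, Nat.sub_add_cancel hj1] at h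
    have : (j : ℚ) ≠ 0 := by positivity
    field_simp
    exact_mod_cast (mul_comm _ _).trans (h.trans (mul_comm _ _))
  rw [sum_congr rfl absorb, ← sum_div, ← Nat.cast_sum, sum_Icc_choose,
    Nat.cast_sub Nat.one_le_two_pow]
  push_cast
  rfl

theorem sum_Icc_sum_divisors_gcd {M : Type*} [AddCommMonoid M] (n : ℕ) (F : ℕ → ℕ → M) :
    ∑ k ∈ Icc 1 n, ∑ d ∈ (n.gcd k).divisors, F k d =
      ∑ d ∈ n.divisors, ∑ j ∈ Icc 1 (n / d), F (d * j) d := by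
  rw [sum_comm' (t' := n.divisors) (s' := fun d => (Icc 1 (n / d)).image (d * ·))]
  · refine sum_congr rfl fun d hd => sum_image fun a _ b _ h => ?_
    exact Nat.eq_of_mul_eq_mul_left (Nat.pos_of_mem_divisors hd) h
  · intro k d
    simp only [mem_Icc, Nat.mem_divisors, Nat.dvd_gcd_iff, mem_image]
    constructor
    · rintro ⟨⟨hk1, hkn⟩, ⟨hdn, ⟨j, rfl⟩⟩, -⟩
      have hd : 0 < d := Nat.pos_of_ne_zero (by rintro rfl; simp at hk1)
      refine ⟨⟨j, ⟨?_, ?_⟩, rfl⟩, hdn, by omega⟩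
      · exact Nat.pos_of_ne_zero (by rintro rfl; simp at hk1)
      · exact (Nat.le_div_iff_mul_le hd).mpr (by linarith)
    · rintro ⟨⟨j, ⟨hj1, hjn⟩, rfl⟩, hdn, hn⟩
      have hd : 0 < d := Nat.pos_of_dvd_of_pos hdn (Nat.pos_of_ne_zero hn)
      refine ⟨⟨Nat.mul_pos hd hj1, ?_⟩, ⟨hdn, dvd_mul_right d j⟩, Nat.gcd_ne_zero_left hn⟩
      exact mul_comm d j ▸ (Nat.le_div_iff_mul_le hd).mp hjn

theorem sum_Icc_multiples_totient_mul_choose {n d : ℕ} (hd : d ∈ n.divisors) :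
    ∑ j ∈ Icc 1 (n / d), 1 / ((d * j : ℕ) : ℚ) *
        ((Nat.totient d : ℚ) * (Nat.choose (n / d - 1) (d * j / d - 1) : ℚ)) =
      (Nat.totient d : ℚ) * (2 ^ (n / d) - 1) / n := by
  have hd0 : 0 < d := Nat.pos_of_mem_divisors hd
  have hn : (n : ℚ) = d * (n / d : ℕ) := by
    exact_mod_cast (Nat.mul_div_cancel' (Nat.dvd_of_mem_divisors hd)).symm
  calc _ = (Nat.totient d : ℚ) / d *
        ∑ j ∈ Icc 1 (n / d), (1 / (j : ℚ)) * (n / d - 1).choose (j - 1) := by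
        rw [mul_sum]
        refine sum_congr rfl fun j _ => ?_
        rw [Nat.mul_div_cancel_left j hd0]
        push_cast
        ring
    _ = _ := by
        rw [sum_Icc_one_div_mul_choose_pred, hn]
        field_simp

/-- Lemma 2. -/
theorem lemma2 (n : ℕ) (hn : 1 ≤ n) :
    (∑ k ∈ Finset.Icc 1 n, (1 / (k : ℚ)) * ∑ d ∈ (Nat.gcd n k).divisors,
        (Nat.totient d : ℚ) * (Nat.choose (n / d - 1) (k / d - 1) : ℚ)) =
      -1 + (1 / (n : ℚ)) * ∑ d ∈ n.divisors, (Nat.totient d : ℚ) * 2 ^ (n / d) := by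
  have hn0 : (n : ℚ) ≠ 0 := by positivity
  have htotient : ∑ d ∈ n.divisors, (Nat.totient d : ℚ) = n := by
    exact_mod_cast Nat.sum_totient n
  rw [sum_congr rfl fun k _ => mul_sum _ _ _, sum_Icc_sum_divisors_gcd,
    sum_congr rfl fun d hd => sum_Icc_multiples_totient_mul_choose hd, ← sum_div]
  simp_rw [mul_sub, mul_one, sum_sub_distrib]
  rw [htotient]
  field_simp
  ring
end

section
/- (Lemma 3, formula (21).) For all integers m ≥ 1 and n ≥ 0, F^(m)_n = Σ_{k=0}^{⌊n/(m+1)⌋} C(n − m·k, k). -/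
open Finset

/-- Lemma 3, formula (21). -/
theorem lemma3_formula21 (m n : ℕ) (hm : 1 ≤ m) :
    Fgen m n = ∑ k ∈ Finset.range (n / (m + 1) + 1), Nat.choose (n - m * k) k := by
  induction n using Nat.strong_induction_on with
  | _ n ih =>
  rw [Fgen]
  split_ifs with h
  · rw [Nat.div_eq_of_lt (by omega)]
    simp
  · push_neg at h
    rw [ih (n-1) (by omega), ih (n-m-1) (by omega)]
    set q := n / (m+1) with hq
    have hr : n % (m+1) < m+1 := Nat.mod_lt n (by omega)
    have hnq : (m+1) * q + n % (m+1) = n := Nat.div_add_mod n (m+1)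
    have hq1 : 1 ≤ q := Nat.div_pos (by omega) (by omega)
    obtain ⟨q', hq'⟩ : ∃ q', q = q' + 1 := ⟨q - 1, by omega⟩
    have hdiv : ∀ a x : ℕ, x < m+1 → ((m+1)*a + x)/(m+1) = a := by
      intro a x hx
      rw [Nat.mul_add_div (by omega), Nat.div_eq_of_lt hx, add_zero]
    have hsplit : (m+1)*q = (m+1)*q' + (m+1) := by rw [hq']; ring
    have hK2 : (n - m - 1) / (m+1) = q' := by
      have h1 : n - m - 1 = (m+1)*q' + n % (m+1) := by omega
      rw [h1, hdiv _ _ hr]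
    -- the (n-1)-sum can be extended to range (q+1)
    have hS1 : ∑ k ∈ Finset.range ((n-1)/(m+1)+1), Nat.choose (n-1-m*k) k
        = ∑ k ∈ Finset.range (q+1), Nat.choose (n-1-m*k) k := by
      rcases Nat.eq_zero_or_pos (n % (m+1)) with hr0 | hr0
      · have hK1 : (n-1)/(m+1) = q' := by
          have h1 : n - 1 = (m+1)*q' + m := by omega
          rw [h1, hdiv _ _ (by omega)]
        rw [hK1]
        conv_rhs => rw [hq', Finset.sum_range_succ]
        have hz : Nat.choose (n - 1 - m*(q'+1)) (q'+1) = 0 := by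
          apply Nat.choose_eq_zero_of_lt
          have e2 : (m+1)*q = m*q' + m + q' + 1 := by rw [hq']; ring
          have e1 : m*(q'+1) = m*q' + m := by ring
          omega
        rw [hz, add_zero]
      · have hK1 : (n-1)/(m+1) = q := by
          have h1 : n - 1 = (m+1)*q + (n % (m+1) - 1) := by omega
          rw [h1, hdiv _ _ (by omega)]
        rw [hK1]
    rw [hS1, hK2, hq']
    -- now compute the main sum
    rw [Finset.sum_range_succ' (f := fun k => Nat.choose (n - m*k) k)]
    have key : ∀ k ∈ Finset.range (q'+1), Nat.choose (n - m*(k+1)) (k+1)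
        = Nat.choose (n - m - 1 - m*k) k + Nat.choose (n - 1 - m*(k+1)) (k+1) := by
      intro k hk
      rw [Finset.mem_range] at hk
      have hle : (m+1)*(k+1) ≤ n := by
        calc (m+1)*(k+1) ≤ (m+1)*q := Nat.mul_le_mul_left _ (by omega)
        _ ≤ n := by omega
      have e0 : (m+1)*(k+1) = m*k + m + k + 1 := by ring
      have e1 : m*(k+1) = m*k + m := by ring
      have e2 : n - m*(k+1) = (n - m - 1 - m*k) + 1 := by omega
      have e3 : n - 1 - m*(k+1) = n - m - 1 - m*k := by omega
      rw [e2, e3, Nat.choose_succ_succ]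
    rw [Finset.sum_congr rfl key, Finset.sum_add_distrib]
    rw [Finset.sum_range_succ' (f := fun k => Nat.choose (n - 1 - m*k) k)]
    simp only [mul_zero, Nat.sub_zero, Nat.choose_zero_right]
    ring
end
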